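/- Let a < b be real numbers and let λ : [a,b] → ℝ be continuous with λ(t) > 0 for all t ∈ [a,b]; set Λ(t,s) = ∫_s^t λ(u) du. Then there exist points α, β, γ ∈ [a,b] such that ∫_a^b (Λ(b,t) · Λ(t,a) / Λ(b,a)) dt = (1/6) · (λ(α)λ(β)/λ(γ)) · (b − a)². In particular, ∫_a^b (Λ(b,t)Λ(t,a)/Λ(b,a)) dt ≤ (1/6) · (sup_{t∈[a,b]} 1/λ(t)) · (sup_{t∈[a,b]} λ(t))² · (b − a)². -/

import Mathlib

/-!
With `m ≤ λ ≤ M` on `[a, b]`, each of `Λ(b,t)`, `Λ(t,a)`, `Λ(b,a)` is squeezed between `m` and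
`M` times the length of its interval, and `∫_a^b (b - t)(t - a) dt = (b - a)³/6`; hence the
integral lies between `(m²/M)(b - a)²/6` and `(M²/m)(b - a)²/6`. Taking `m = λ(p)` and `M = λ(q)`
at a minimum and a maximum, these bounds are the values of `(x, y) ↦ λ(x)²/λ(y)` at `(p, q)` and
`(q, p)`, so the intermediate value theorem on the square `[a, b]²` gives `α = β` and `γ`.
-/

open MeasureTheory intervalIntegral

theorem integral_sub_mul_sub (a b : ℝ) :
    ∫ t in a..b, (b - t) * (t - a) = (b - a) ^ 3 / 6 := by
  have h : ∀ t : ℝ, (b - t) * (t - a) = (a + b) * t - t ^ 2 - a * b := fun t => by ring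
  simp only [h]
  rw [intervalIntegral.integral_sub, intervalIntegral.integral_sub,
    intervalIntegral.integral_const_mul, integral_pow, integral_id, intervalIntegral.integral_const]
  · simp only [smul_eq_mul]; ring
  all_goals exact Continuous.intervalIntegrable (by fun_prop) a b

section PrimitiveBounds

variable {f : ℝ → ℝ} {a b m M : ℝ}

theorem mul_sub_le_integral_of_le (hab : a ≤ b) (hf : IntervalIntegrable f volume a b)
    (hm : ∀ u ∈ Set.Icc a b, m ≤ f u) : m * (b - a) ≤ ∫ u in a..b, f u := by
  simpa [mul_comm] using integral_mono_on hab intervalIntegrable_const hf hm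

theorem integral_le_mul_sub_of_le (hab : a ≤ b) (hf : IntervalIntegrable f volume a b)
    (hM : ∀ u ∈ Set.Icc a b, f u ≤ M) : ∫ u in a..b, f u ≤ M * (b - a) := by
  simpa [mul_comm] using integral_mono_on hab hf intervalIntegrable_const hM

theorem integral_mul_integral_mem_Icc {t : ℝ} (ht : t ∈ Set.Icc a b) (hm0 : 0 ≤ m)
    (hf : IntervalIntegrable f volume a b) (hm : ∀ u ∈ Set.Icc a b, m ≤ f u)
    (hM : ∀ u ∈ Set.Icc a b, f u ≤ M) :
    (∫ u in t..b, f u) * (∫ u in a..t, f u) ∈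
      Set.Icc (m ^ 2 * ((b - t) * (t - a))) (M ^ 2 * ((b - t) * (t - a))) := by
  have hab : a ≤ b := ht.1.trans ht.2
  have hleft : IntervalIntegrable f volume a t := hf.mono_set <| by
    rw [Set.uIcc_of_le ht.1, Set.uIcc_of_le hab]; exact Set.Icc_subset_Icc_right ht.2
  have hright : IntervalIntegrable f volume t b := hf.mono_set <| by
    rw [Set.uIcc_of_le ht.2, Set.uIcc_of_le hab]; exact Set.Icc_subset_Icc_left ht.1
  have hA₁ := mul_sub_le_integral_of_le ht.2 hright fun u hu =>
    hm u (Set.Icc_subset_Icc_left ht.1 hu)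
  have hA₂ := integral_le_mul_sub_of_le ht.2 hright fun u hu =>
    hM u (Set.Icc_subset_Icc_left ht.1 hu)
  have hB₁ := mul_sub_le_integral_of_le ht.1 hleft fun u hu =>
    hm u (Set.Icc_subset_Icc_right ht.2 hu)
  have hB₂ := integral_le_mul_sub_of_le ht.1 hleft fun u hu =>
    hM u (Set.Icc_subset_Icc_right ht.2 hu)
  have hbt : 0 ≤ m * (b - t) := mul_nonneg hm0 (sub_nonneg.2 ht.2)
  have hta : 0 ≤ m * (t - a) := mul_nonneg hm0 (sub_nonneg.2 ht.1)
  constructor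
  · calc m ^ 2 * ((b - t) * (t - a)) = (m * (b - t)) * (m * (t - a)) := by ring
      _ ≤ _ := mul_le_mul hA₁ hB₁ hta (hbt.trans hA₁)
  · calc (∫ u in t..b, f u) * (∫ u in a..t, f u) ≤ (M * (b - t)) * (M * (t - a)) :=
          mul_le_mul hA₂ hB₂ (hta.trans hB₁) ((hbt.trans hA₁).trans hA₂)
      _ = M ^ 2 * ((b - t) * (t - a)) := by ring

theorem continuousOn_integral_mul_integral (hab : a ≤ b) (hf : IntervalIntegrable f volume a b) :
    ContinuousOn (fun t => (∫ u in t..b, f u) * (∫ u in a..t, f u)) (Set.Icc a b) := by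
  have hf' : IntegrableOn f (Set.uIcc a b) volume := by
    rw [Set.uIcc_of_le hab]; exact (intervalIntegrable_iff_integrableOn_Icc_of_le hab).1 hf
  rw [← Set.uIcc_of_le hab]
  exact (continuousOn_primitive_interval_left hf').mul (continuousOn_primitive_interval hf')

theorem integral_integral_mul_integral_mem_Icc (hab : a ≤ b) (hm0 : 0 ≤ m)
    (hf : IntervalIntegrable f volume a b) (hm : ∀ u ∈ Set.Icc a b, m ≤ f u)
    (hM : ∀ u ∈ Set.Icc a b, f u ≤ M) :
    ∫ t in a..b, (∫ u in t..b, f u) * (∫ u in a..t, f u) ∈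
      Set.Icc (m ^ 2 * ((b - a) ^ 3 / 6)) (M ^ 2 * ((b - a) ^ 3 / 6)) := by
  have hcont :=
    (continuousOn_integral_mul_integral hab hf).intervalIntegrable_of_Icc (μ := volume) hab
  have hpoly : ∀ c : ℝ, IntervalIntegrable (fun t => c * ((b - t) * (t - a))) volume a b :=
    fun c => Continuous.intervalIntegrable (by fun_prop) a b
  rw [← integral_sub_mul_sub, ← intervalIntegral.integral_const_mul,
    ← intervalIntegral.integral_const_mul]
  exact ⟨integral_mono_on hab (hpoly _) hcont fun t ht =>
      (integral_mul_integral_mem_Icc ht hm0 hf hm hM).1,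
    integral_mono_on hab hcont (hpoly _) fun t ht =>
      (integral_mul_integral_mem_Icc ht hm0 hf hm hM).2⟩

theorem integral_integral_mul_integral_div_mem_Icc (hab : a < b) (hm0 : 0 < m)
    (hf : IntervalIntegrable f volume a b) (hm : ∀ u ∈ Set.Icc a b, m ≤ f u)
    (hM : ∀ u ∈ Set.Icc a b, f u ≤ M) :
    ∫ t in a..b, (∫ u in t..b, f u) * (∫ u in a..t, f u) / (∫ u in a..b, f u) ∈
      Set.Icc (m ^ 2 / M * ((b - a) ^ 2 / 6)) (M ^ 2 / m * ((b - a) ^ 2 / 6)) := by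
  obtain ⟨hJ₁, hJ₂⟩ := integral_integral_mul_integral_mem_Icc hab.le hm0.le hf hm hM
  have hC₁ := mul_sub_le_integral_of_le hab.le hf hm
  have hC₂ := integral_le_mul_sub_of_le hab.le hf hM
  have hba : 0 < b - a := sub_pos.2 hab
  have hC : 0 < ∫ u in a..b, f u := (mul_pos hm0 hba).trans_le hC₁
  have hJ : 0 ≤ ∫ t in a..b, (∫ u in t..b, f u) * (∫ u in a..t, f u) :=
    le_trans (by positivity) hJ₁
  rw [intervalIntegral.integral_div]
  constructor
  · calc m ^ 2 / M * ((b - a) ^ 2 / 6) = m ^ 2 * ((b - a) ^ 3 / 6) / (M * (b - a)) := by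
          field_simp
      _ ≤ _ := div_le_div₀ hJ hJ₁ hC hC₂
  · calc _ ≤ M ^ 2 * ((b - a) ^ 3 / 6) / (m * (b - a)) :=
          div_le_div₀ (by positivity) hJ₂ (by positivity) hC₁
      _ = M ^ 2 / m * ((b - a) ^ 2 / 6) := by field_simp

end PrimitiveBounds

section Extrema

variable {X : Type*} [TopologicalSpace X] {s : Set X} {f : X → ℝ}

theorem IsPreconnected.exists_sq_div_eq (hs : IsPreconnected s) (hf : ContinuousOn f s)
    (hf0 : ∀ x ∈ s, f x ≠ 0) {p q : X} (hp : p ∈ s) (hq : q ∈ s) {r : ℝ}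
    (hr : r ∈ Set.Icc (f p ^ 2 / f q) (f q ^ 2 / f p)) :
    ∃ x ∈ s, ∃ y ∈ s, f x ^ 2 / f y = r := by
  have hcont : ContinuousOn (fun z : X × X => f z.1 ^ 2 / f z.2) (s ×ˢ s) := by
    have h₁ : ContinuousOn (fun z : X × X => f z.1) (s ×ˢ s) :=
      hf.comp continuousOn_fst fun z hz => hz.1
    have h₂ : ContinuousOn (fun z : X × X => f z.2) (s ×ˢ s) :=
      hf.comp continuousOn_snd fun z hz => hz.2
    exact (h₁.pow 2).div h₂ fun z hz => hf0 z.2 hz.2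
  obtain ⟨⟨x, y⟩, hxy, h⟩ := (hs.prod hs).intermediate_value (Set.mk_mem_prod hp hq)
    (Set.mk_mem_prod hq hp) hcont hr
  exact ⟨x, hxy.1, y, hxy.2, h⟩

theorem IsCompact.mul_div_le_sSup_inv_mul_sSup_sq (hs : IsCompact s) (hf : ContinuousOn f s)
    (hpos : ∀ x ∈ s, 0 < f x) {x y z : X} (hx : x ∈ s) (hy : y ∈ s) (hz : z ∈ s) :
    f x * f y / f z ≤ sSup ((fun t => (f t)⁻¹) '' s) * sSup (f '' s) ^ 2 := by
  have hsup : ∀ w ∈ s, f w ≤ sSup (f '' s) := fun w hw =>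
    le_csSup (hs.image_of_continuousOn hf).bddAbove ⟨w, hw, rfl⟩
  have hsup_inv : (f z)⁻¹ ≤ sSup ((fun t => (f t)⁻¹) '' s) :=
    le_csSup (hs.image_of_continuousOn (hf.inv₀ fun t ht => (hpos t ht).ne')).bddAbove
      ⟨z, hz, rfl⟩
  have hfx := hpos x hx
  have hfy := hpos y hy
  have hfz := hpos z hz
  calc f x * f y / f z = (f z)⁻¹ * (f x * f y) := by ring
    _ ≤ sSup ((fun t => (f t)⁻¹) '' s) * (sSup (f '' s) * sSup (f '' s)) := by
        gcongr
        · exact (inv_pos.2 hfz).le.trans hsup_inv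
        · exact hfx.le.trans (hsup x hx)
        · exact hsup x hx
        · exact hsup y hy
    _ = _ := by ring

end Extrema

theorem stmt_10 (a b : ℝ) (hab : a < b) (lam : ℝ → ℝ)
    (hlam : ContinuousOn lam (Set.Icc a b))
    (hlampos : ∀ t ∈ Set.Icc a b, 0 < lam t) :
    (∃ α ∈ Set.Icc a b, ∃ β ∈ Set.Icc a b, ∃ γ ∈ Set.Icc a b,
      (∫ t in a..b,
          (∫ u in t..b, lam u) * (∫ u in a..t, lam u) / (∫ u in a..b, lam u)) =
        (1 / 6) * (lam α * lam β / lam γ) * (b - a) ^ 2) ∧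
    (∫ t in a..b,
        (∫ u in t..b, lam u) * (∫ u in a..t, lam u) / (∫ u in a..b, lam u)) ≤
      (1 / 6) * sSup ((fun t => (lam t)⁻¹) '' Set.Icc a b) *
        (sSup (lam '' Set.Icc a b)) ^ 2 * (b - a) ^ 2 := by
  obtain ⟨p, hp, hmin⟩ := isCompact_Icc.exists_isMinOn (Set.nonempty_Icc.2 hab.le) hlam
  obtain ⟨q, hq, hmax⟩ := isCompact_Icc.exists_isMaxOn (Set.nonempty_Icc.2 hab.le) hlam
  obtain ⟨hI₁, hI₂⟩ := integral_integral_mul_integral_div_mem_Icc hab (hlampos p hp)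
    (hlam.intervalIntegrable_of_Icc hab.le) (fun u hu => hmin hu) (fun u hu => hmax hu)
  set I := ∫ t in a..b,
    (∫ u in t..b, lam u) * (∫ u in a..t, lam u) / (∫ u in a..b, lam u)
  have hc : 0 < (b - a) ^ 2 / 6 := by have := sub_pos.2 hab; positivity
  obtain ⟨x, hx, y, hy, hxy⟩ := isPreconnected_Icc.exists_sq_div_eq hlam
    (fun t ht => (hlampos t ht).ne') hp hq (r := I / ((b - a) ^ 2 / 6))
    ⟨(le_div_iff₀ hc).2 hI₁, (div_le_iff₀ hc).2 hI₂⟩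
  have hI : I = 1 / 6 * (lam x * lam x / lam y) * (b - a) ^ 2 := by
    have := (sub_pos.2 hab).ne'
    rw [← sq, hxy]; field_simp
  refine ⟨⟨x, hx, x, hx, y, hy, hI⟩, hI ▸ ?_⟩
  calc 1 / 6 * (lam x * lam x / lam y) * (b - a) ^ 2
      ≤ 1 / 6 * (sSup ((fun t => (lam t)⁻¹) '' Set.Icc a b) * sSup (lam '' Set.Icc a b) ^ 2) *
          (b - a) ^ 2 := by
        gcongr
        exact isCompact_Icc.mul_div_le_sSup_inv_mul_sSup_sq hlam hlampos hx hx hy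
    _ = _ := by ring
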